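/- arXiv:2402.15763 — 2 statements merged into one kernel-verified Lean document; each statement's English description precedes it below -/
import Mathlib

section
/- On 𝓗 = L²(ℝ, dθ), let (J_H ψ)(θ) = conj(ψ(θ)) and (Δ_H^{it}ψ)(θ) = ψ(θ − 2πt), defining a standard subspace H. For φ ∈ H^∞(𝕊_π) (bounded analytic on the strip 0 < Im ζ < π) with boundary values satisfying φ(θ+iπ) = conj(φ(θ)), the operator (T_φ Ψ)(θ₁,θ₂) = φ(θ₂−θ₁)Ψ(θ₂,θ₁) on L²(ℝ²) is S_H-crossing symmetric. -/
/-! Expanding both sides of the crossing relation on product vectors and applying Fubini, each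
becomes `∫ s, conj φ₂(s) ψ₁(s) · I(s)`, so it suffices that multiplication by `φ_s = φ(· - s)`
commutes with `S_H`: `S_H (φ_s · S_H x) = φ_s · x`. If `Ψ` is the Hardy-class continuation of
`S_H x`, then `φ(· - s) Ψ` continues `φ_s · S_H x`, and `φ(θ + iπ) = conj φ(θ)` turns its boundary
value on `ℝ + iπ` into `φ_s · x`. The adjoint relation then gives
`⟪S_H* ψ₂, φ_s · S_H φ₁⟫ = ⟪φ_s · φ₁, ψ₂⟫`, which is the required identity of the inner integrals.
-/

noncomputable section
open scoped InnerProductSpace ComplexConjugate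

variable {H K : Type*}

/-- A realization of the Hilbert space tensor square of `H` on a Hilbert space `K`. -/
structure TensorSquare (H K : Type*) [NormedAddCommGroup H] [InnerProductSpace ℂ H]
    [NormedAddCommGroup K] [InnerProductSpace ℂ K] : Type _ where
  tmul : H → H → K
  tmul_add_left : ∀ a a' b, tmul (a + a') b = tmul a b + tmul a' b
  tmul_add_right : ∀ a b b', tmul a (b + b') = tmul a b + tmul a b'
  tmul_smul_left : ∀ (c : ℂ) a b, tmul (c • a) b = c • tmul a b
  tmul_smul_right : ∀ (c : ℂ) a b, tmul a (c • b) = c • tmul a b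
  inner_tmul : ∀ a b c d, ⟪tmul a b, tmul c d⟫_ℂ = ⟪a, c⟫_ℂ * ⟪b, d⟫_ℂ
  dense_span : Dense (↑(Submodule.span ℂ (Set.range fun p : H × H => tmul p.1 p.2)) : Set K)

/-- A densely defined closed antilinear involution `S` on `H`, together with its adjoint `S*`. -/
structure AntiInvolution (H : Type*) [NormedAddCommGroup H] [InnerProductSpace ℂ H] : Type _ where
  dom : Submodule ℂ H
  toFun : H → H
  dense_dom : Dense (dom : Set H)
  map_add : ∀ x ∈ dom, ∀ y ∈ dom, toFun (x + y) = toFun x + toFun y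
  map_smul : ∀ (c : ℂ), ∀ x ∈ dom, toFun (c • x) = (starRingEnd ℂ c) • toFun x
  invol_mem : ∀ x ∈ dom, toFun x ∈ dom
  invol : ∀ x ∈ dom, toFun (toFun x) = x
  closed_graph : IsClosed {p : H × H | p.1 ∈ dom ∧ toFun p.1 = p.2}
  adjDom : Submodule ℂ H
  adjFun : H → H
  dense_adjDom : Dense (adjDom : Set H)
  adj_spec : ∀ y ∈ adjDom, ∀ x ∈ dom, ⟪adjFun y, x⟫_ℂ = ⟪toFun x, y⟫_ℂ
  adj_max : ∀ y z : H, (∀ x ∈ dom, ⟪z, x⟫_ℂ = ⟪toFun x, y⟫_ℂ) → y ∈ adjDom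

section
variable [NormedAddCommGroup H] [InnerProductSpace ℂ H]
  [NormedAddCommGroup K] [InnerProductSpace ℂ K]

/-- The crossing relation (unbounded `S`): `Tc = Cross_S(T)`. -/
def CrossRelU (τ : TensorSquare H K) (S : AntiInvolution H) (T Tc : K →L[ℂ] K) : Prop :=
  ∀ φ₁ ∈ S.dom, ∀ ψ₁ ∈ S.dom, ∀ φ₂ ∈ S.adjDom, ∀ ψ₂ ∈ S.adjDom,
    ⟪τ.tmul φ₁ φ₂, Tc (τ.tmul ψ₁ ψ₂)⟫_ℂ
      = ⟪τ.tmul φ₂ (S.adjFun ψ₂), T (τ.tmul (S.toFun φ₁) ψ₁)⟫_ℂ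

/-- The crossing relation for an everywhere defined (bounded) antilinear involution `S`
with adjoint `Sstar`. -/
def CrossRelB (τ : TensorSquare H K) (S Sstar : H →SL[starRingEnd ℂ] H) (T Tc : K →L[ℂ] K) :
    Prop :=
  ∀ φ₁ φ₂ ψ₁ ψ₂ : H,
    ⟪τ.tmul φ₁ φ₂, Tc (τ.tmul ψ₁ ψ₂)⟫_ℂ = ⟪τ.tmul φ₂ (Sstar ψ₂), T (τ.tmul (S φ₁) ψ₁)⟫_ℂ

end

open MeasureTheory Complex

open Filter

theorem MeasureTheory.L2.inner_eq_integral_conj_mul {α 𝕜 : Type*} [MeasurableSpace α]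
    {μ : Measure α} [RCLike 𝕜] (f g : Lp 𝕜 2 μ) : ⟪f, g⟫_𝕜 = ∫ x, conj (f x) * g x ∂μ := by
  simp only [L2.inner_def, RCLike.inner_apply']

theorem MeasureTheory.L2.integrable_conj_mul {α 𝕜 : Type*} [MeasurableSpace α]
    {μ : Measure α} [RCLike 𝕜] (f g : Lp 𝕜 2 μ) : Integrable (fun x => conj (f x) * g x) μ := by
  simpa only [RCLike.inner_apply'] using L2.integrable_inner (𝕜 := 𝕜) f g

theorem integral_norm_mul_sq_le {α 𝕜 : Type*} [MeasurableSpace α] {μ : Measure α}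
    [NormedDivisionRing 𝕜] {a f : α → 𝕜} {C : ℝ} (hf : AEStronglyMeasurable f μ)
    (ha_le : ∀ x, ‖a x‖ ≤ C) (one_le_ha : ∀ x, 1 ≤ ‖a x‖) :
    ∫ x, ‖a x * f x‖ ^ 2 ∂μ ≤ C ^ 2 * ∫ x, ‖f x‖ ^ 2 ∂μ := by
  have hpoint : ∀ x, ‖f x‖ ^ 2 ≤ ‖a x * f x‖ ^ 2 ∧ ‖a x * f x‖ ^ 2 ≤ C ^ 2 * ‖f x‖ ^ 2 := by
    intro x
    have h0 := norm_nonneg (a x)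
    rw [norm_mul, mul_pow]
    exact ⟨le_mul_of_one_le_left (by positivity) (one_le_pow₀ (one_le_ha x)),
      mul_le_mul_of_nonneg_right (pow_le_pow_left₀ h0 (ha_le x) 2) (by positivity)⟩
  by_cases hint : Integrable (fun x => ‖f x‖ ^ 2) μ
  · rw [← integral_const_mul]
    exact integral_mono_of_nonneg (ae_of_all _ fun x => by positivity) (hint.const_mul _)
      (ae_of_all _ fun x => (hpoint x).2)
  · -- the lower bound on `a` makes both integrands non-integrable, so both sides are `0`
    have hint' : ¬ Integrable (fun x => ‖a x * f x‖ ^ 2) μ := fun h =>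
      hint (h.mono' (hf.norm.pow 2) (ae_of_all _ fun x => by
        rw [Real.norm_of_nonneg (by positivity)]; exact (hpoint x).1))
    rw [integral_undef hint, integral_undef hint', mul_zero]

theorem integral_prod_bdd_mul_mul {α β 𝕜 : Type*} [MeasurableSpace α] [MeasurableSpace β]
    {μ : Measure α} {ν : Measure β} [SFinite μ] [SFinite ν] [RCLike 𝕜]
    {k : α × β → 𝕜} {a : α → 𝕜} {b : β → 𝕜} {C : ℝ}
    (hk : AEStronglyMeasurable k (μ.prod ν)) (hkC : ∀ p, ‖k p‖ ≤ C)
    (ha : Integrable a μ) (hb : Integrable b ν) :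
    ∫ p, k p * (a p.1 * b p.2) ∂(μ.prod ν) = ∫ x, a x * ∫ y, k (x, y) * b y ∂ν ∂μ := by
  rw [integral_prod _ ((ha.mul_prod hb).bdd_mul hk (ae_of_all _ hkC))]
  refine integral_congr_ae (ae_of_all _ fun x => ?_)
  simp only [← integral_const_mul]
  congr 1
  funext y
  ring

theorem AntiInvolution.toFun_sub {H : Type*} [NormedAddCommGroup H] [InnerProductSpace ℂ H]
    (S : AntiInvolution H) {x y : H} (hx : x ∈ S.dom) (hy : y ∈ S.dom) :
    S.toFun (x - y) = S.toFun x - S.toFun y := by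
  have h := S.map_add (x - y) (sub_mem hx hy) y hy
  rw [sub_add_cancel] at h
  rw [h, add_sub_cancel_right]

def stripPi : Set ℂ := {z : ℂ | 0 < z.im ∧ z.im < Real.pi}

def closedStripPi : Set ℂ := {z : ℂ | 0 ≤ z.im ∧ z.im ≤ Real.pi}

theorem sub_ofReal_mem_stripPi {z : ℂ} (hz : z ∈ stripPi) (s : ℝ) : z - s ∈ stripPi := by
  simpa [stripPi] using hz

theorem sub_ofReal_mem_closedStripPi {z : ℂ} (hz : z ∈ closedStripPi) (s : ℝ) :
    z - s ∈ closedStripPi := by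
  simpa [closedStripPi] using hz

theorem ofReal_add_mul_I_mem_closedStripPi (θ : ℝ) {t : ℝ} (ht : t ∈ Set.Icc 0 Real.pi) :
    (θ : ℂ) + t * I ∈ closedStripPi := by
  simpa [closedStripPi] using ht

theorem ofReal_mem_closedStripPi (θ : ℝ) : (θ : ℂ) ∈ closedStripPi := by
  simpa using ofReal_add_mul_I_mem_closedStripPi θ (Set.left_mem_Icc.2 Real.pi_pos.le)

/-- The graph of the Tomita operator `S_H`. -/
def HardyStripGraph (ψ χ : Lp ℂ 2 (volume : Measure ℝ)) : Prop :=
  ∃ Ψ : ℂ → ℂ,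
    DifferentiableOn ℂ Ψ stripPi ∧
    ContinuousOn Ψ closedStripPi ∧
    (∃ M : ℝ, ∀ t ∈ Set.Icc (0 : ℝ) Real.pi, (∫ θ : ℝ, ‖Ψ ((θ : ℂ) + t * I)‖ ^ 2) ≤ M) ∧
    (ψ : ℝ → ℂ) =ᵐ[volume] (fun θ : ℝ => Ψ (θ : ℂ)) ∧
    (χ : ℝ → ℂ) =ᵐ[volume] (fun θ : ℝ => conj (Ψ ((θ : ℂ) + Real.pi * I)))

/-- The lower bound `1 ≤ ‖m‖` is needed because a non-integrable integral is `0`, so the Hardy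
bound in `HardyStripGraph` says nothing on a line where `Ψ` is not square integrable. -/
structure IsStripMultiplier (m : ℂ → ℂ) (C : ℝ) : Prop where
  differentiableOn : DifferentiableOn ℂ m stripPi
  continuousOn : ContinuousOn m closedStripPi
  norm_le : ∀ z ∈ closedStripPi, ‖m z‖ ≤ C
  one_le_norm : ∀ z ∈ closedStripPi, 1 ≤ ‖m z‖
  conj_apply_add_pi_mul_I : ∀ θ : ℝ, conj (m ((θ : ℂ) + Real.pi * I)) = m θ

theorem HardyStripGraph.mul {ψ χ : Lp ℂ 2 (volume : Measure ℝ)} (h : HardyStripGraph ψ χ)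
    {m : ℂ → ℂ} {C : ℝ} (hm : IsStripMultiplier m C) {ψ' χ' : Lp ℂ 2 (volume : Measure ℝ)}
    (hψ' : (ψ' : ℝ → ℂ) =ᵐ[volume] fun θ => m θ * ψ θ)
    (hχ' : (χ' : ℝ → ℂ) =ᵐ[volume] fun θ => m θ * χ θ) :
    HardyStripGraph ψ' χ' := by
  obtain ⟨Ψ, hΨa, hΨc, ⟨M, hM⟩, hψ, hχ⟩ := h
  refine ⟨fun z => m z * Ψ z, hm.differentiableOn.mul hΨa, hm.continuousOn.mul hΨc,
    ⟨C ^ 2 * M, fun t ht => ?_⟩, ?_, ?_⟩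
  · have hline : Continuous fun θ : ℝ => (θ : ℂ) + t * I :=
      continuous_ofReal.add continuous_const
    have hmem := fun θ => ofReal_add_mul_I_mem_closedStripPi θ ht
    calc (∫ θ : ℝ, ‖m ((θ : ℂ) + t * I) * Ψ ((θ : ℂ) + t * I)‖ ^ 2)
        ≤ C ^ 2 * ∫ θ : ℝ, ‖Ψ ((θ : ℂ) + t * I)‖ ^ 2 :=
          integral_norm_mul_sq_le (hΨc.comp_continuous hline hmem).aestronglyMeasurable
            (fun θ => hm.norm_le _ (hmem θ)) (fun θ => hm.one_le_norm _ (hmem θ))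
      _ ≤ C ^ 2 * M := mul_le_mul_of_nonneg_left (hM t ht) (sq_nonneg C)
  · filter_upwards [hψ', hψ] with θ h₁ h₂
    rw [h₁, h₂]
  · filter_upwards [hχ', hχ] with θ h₁ h₂
    rw [h₁, h₂, map_mul, hm.conj_apply_add_pi_mul_I]

theorem isStripMultiplier_sub_add_const {φ : ℂ → ℂ} (hφa : DifferentiableOn ℂ φ stripPi)
    (hφc : ContinuousOn φ closedStripPi) {M : ℝ} (hM : ∀ z ∈ closedStripPi, ‖φ z‖ ≤ M)
    (hφbc : ∀ θ : ℝ, φ ((θ : ℂ) + Real.pi * I) = conj (φ (θ : ℂ))) (s : ℝ) :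
    IsStripMultiplier (fun z => φ (z - s) + (M + 1 : ℝ)) (2 * M + 1) := by
  have hM0 : 0 ≤ M := (norm_nonneg _).trans (hM 0 (by simpa using ofReal_mem_closedStripPi 0))
  have hc : ‖((M + 1 : ℝ) : ℂ)‖ = M + 1 := by
    rw [norm_real, Real.norm_of_nonneg (by linarith)]
  refine ⟨?_, ?_, fun z hz => ?_, fun z hz => ?_, fun θ => ?_⟩
  · exact (hφa.comp (differentiableOn_id.sub_const _)
      fun z hz => sub_ofReal_mem_stripPi hz s).add_const _
  · exact (hφc.comp (continuousOn_id.sub continuousOn_const)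
      fun z hz => sub_ofReal_mem_closedStripPi hz s).add continuousOn_const
  · have := hM _ (sub_ofReal_mem_closedStripPi hz s)
    calc ‖φ (z - s) + ((M + 1 : ℝ) : ℂ)‖ ≤ ‖φ (z - s)‖ + ‖((M + 1 : ℝ) : ℂ)‖ := norm_add_le _ _
      _ ≤ 2 * M + 1 := by linarith
  · have := hM _ (sub_ofReal_mem_closedStripPi hz s)
    have := norm_sub_le (φ (z - s) + ((M + 1 : ℝ) : ℂ)) (φ (z - s))
    rw [add_sub_cancel_left, hc] at this
    linarith
  · rw [map_add, conj_ofReal, add_sub_right_comm, ← ofReal_sub, hφbc, conj_conj, ofReal_sub]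

theorem AntiInvolution.toFun_mul_toFun {S : AntiInvolution (Lp ℂ 2 (volume : Measure ℝ))}
    (hS : ∀ ψ χ : Lp ℂ 2 (volume : Measure ℝ),
      (ψ ∈ S.dom ∧ S.toFun ψ = χ) ↔ HardyStripGraph ψ χ)
    {φ : ℂ → ℂ} (hφa : DifferentiableOn ℂ φ stripPi) (hφc : ContinuousOn φ closedStripPi)
    {M : ℝ} (hM : ∀ z ∈ closedStripPi, ‖φ z‖ ≤ M)
    (hφbc : ∀ θ : ℝ, φ ((θ : ℂ) + Real.pi * I) = conj (φ (θ : ℂ))) (s : ℝ)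
    {x : Lp ℂ 2 (volume : Measure ℝ)} (hx : x ∈ S.dom) {ψ χ : Lp ℂ 2 (volume : Measure ℝ)}
    (hψ : (ψ : ℝ → ℂ) =ᵐ[volume] fun θ => φ (θ - s) * S.toFun x θ)
    (hχ : (χ : ℝ → ℂ) =ᵐ[volume] fun θ => φ (θ - s) * x θ) :
    ψ ∈ S.dom ∧ S.toFun ψ = χ := by
  -- `φ (· - s)` itself may vanish, so pass through the multiplier `φ (· - s) + c`
  set c : ℂ := ((M + 1 : ℝ) : ℂ)
  have hSx : S.toFun x ∈ S.dom := S.invol_mem x hx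
  have hcSx : c • S.toFun x ∈ S.dom := S.dom.smul_mem c hSx
  have hgraph : HardyStripGraph (S.toFun x) x := (hS _ _).1 ⟨hSx, S.invol x hx⟩
  obtain ⟨hdom, hS_add⟩ := (hS (ψ + c • S.toFun x) (χ + c • x)).2 <|
    hgraph.mul (isStripMultiplier_sub_add_const hφa hφc hM hφbc s)
      (by
        filter_upwards [Lp.coeFn_add ψ (c • S.toFun x), Lp.coeFn_smul c (S.toFun x), hψ]
          with θ h₁ h₂ h₃
        rw [h₁, Pi.add_apply, h₂, h₃, Pi.smul_apply, smul_eq_mul, add_mul])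
      (by
        filter_upwards [Lp.coeFn_add χ (c • x), Lp.coeFn_smul c x, hχ] with θ h₁ h₂ h₃
        rw [h₁, Pi.add_apply, h₂, h₃, Pi.smul_apply, smul_eq_mul, add_mul])
  have hψ_eq : ψ = (ψ + c • S.toFun x) - c • S.toFun x := (add_sub_cancel_right _ _).symm
  have hS_smul : S.toFun (c • S.toFun x) = c • x := by
    rw [S.map_smul c _ hSx, S.invol x hx, conj_ofReal]
  refine ⟨hψ_eq ▸ sub_mem hdom hcSx, ?_⟩
  rw [hψ_eq, S.toFun_sub hdom hcSx, hS_add, hS_smul, add_sub_cancel_right]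

theorem AntiInvolution.integral_conj_mul_eq_adjFun
    {S : AntiInvolution (Lp ℂ 2 (volume : Measure ℝ))}
    (hS : ∀ ψ χ : Lp ℂ 2 (volume : Measure ℝ),
      (ψ ∈ S.dom ∧ S.toFun ψ = χ) ↔ HardyStripGraph ψ χ)
    {φ : ℂ → ℂ} (hφa : DifferentiableOn ℂ φ stripPi) (hφc : ContinuousOn φ closedStripPi)
    {M : ℝ} (hM : ∀ z ∈ closedStripPi, ‖φ z‖ ≤ M)
    (hφbc : ∀ θ : ℝ, φ ((θ : ℂ) + Real.pi * I) = conj (φ (θ : ℂ))) (s : ℝ)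
    {x y : Lp ℂ 2 (volume : Measure ℝ)} (hx : x ∈ S.dom) (hy : y ∈ S.adjDom) :
    ∫ θ : ℝ, conj (φ (θ - s)) * (conj (x θ) * y θ)
      = ∫ θ : ℝ, φ (θ - s) * (conj (S.adjFun y θ) * S.toFun x θ) := by
  have hφs : Continuous fun θ : ℝ => φ (θ - s) :=
    hφc.comp_continuous (continuous_ofReal.sub continuous_const)
      fun θ => sub_ofReal_mem_closedStripPi (ofReal_mem_closedStripPi θ) s
  have hmem (f : Lp ℂ 2 (volume : Measure ℝ)) : MemLp (fun θ : ℝ => φ (θ - s) * f θ) 2 volume :=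
    (Lp.memLp f).of_le_mul (hφs.aestronglyMeasurable.mul (Lp.aestronglyMeasurable f))
      (ae_of_all _ fun θ => by
        rw [norm_mul]
        exact mul_le_mul_of_nonneg_right
          (hM _ (sub_ofReal_mem_closedStripPi (ofReal_mem_closedStripPi θ) s)) (norm_nonneg _))
  obtain ⟨hψ, hSψ⟩ := S.toFun_mul_toFun hS hφa hφc hM hφbc s hx
    (hmem (S.toFun x)).coeFn_toLp (hmem x).coeFn_toLp
  calc ∫ θ : ℝ, conj (φ (θ - s)) * (conj (x θ) * y θ)
      = ⟪(hmem x).toLp _, y⟫_ℂ := by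
        rw [L2.inner_eq_integral_conj_mul]
        refine integral_congr_ae ?_
        filter_upwards [(hmem x).coeFn_toLp] with θ h
        rw [h, map_mul, mul_assoc]
    _ = ⟪S.adjFun y, (hmem (S.toFun x)).toLp _⟫_ℂ := by rw [S.adj_spec y hy _ hψ, hSψ]
    _ = ∫ θ : ℝ, φ (θ - s) * (conj (S.adjFun y θ) * S.toFun x θ) := by
        rw [L2.inner_eq_integral_conj_mul]
        refine integral_congr_ae ?_
        filter_upwards [(hmem (S.toFun x)).coeFn_toLp] with θ h
        rw [h, mul_left_comm]

theorem continuous_apply_ofReal_sub {φ : ℂ → ℂ} (hφ : Continuous fun θ : ℝ => φ θ) :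
    Continuous fun p : ℝ × ℝ => φ (p.2 - p.1) := by
  refine (hφ.comp (continuous_snd.sub continuous_fst)).congr fun p => ?_
  simp only [Function.comp_apply, Pi.sub_apply, ofReal_sub]

section Tensor

variable {τ : TensorSquare (Lp ℂ 2 (volume : Measure ℝ)) (Lp ℂ 2 (volume : Measure (ℝ × ℝ)))}
  {φ : ℂ → ℂ} {T : Lp ℂ 2 (volume : Measure (ℝ × ℝ)) →L[ℂ] Lp ℂ 2 (volume : Measure (ℝ × ℝ))}

theorem TensorSquare.apply_tmul_ae_eq
    (hτ : ∀ f g : Lp ℂ 2 (volume : Measure ℝ),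
      (τ.tmul f g : ℝ × ℝ → ℂ) =ᵐ[volume] fun p => f p.1 * g p.2)
    (hT : ∀ Ψ : Lp ℂ 2 (volume : Measure (ℝ × ℝ)),
      (T Ψ : ℝ × ℝ → ℂ) =ᵐ[volume] fun p => φ ((p.2 : ℂ) - (p.1 : ℂ)) * Ψ (p.2, p.1))
    (f g : Lp ℂ 2 (volume : Measure ℝ)) :
    (T (τ.tmul f g) : ℝ × ℝ → ℂ) =ᵐ[volume] fun p => φ (p.2 - p.1) * (f p.2 * g p.1) := by
  have hswap := Measure.measurePreserving_swap.quasiMeasurePreserving.ae_eq_comp (hτ f g)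
  filter_upwards [hT (τ.tmul f g), hswap] with p h₁ h₂
  rw [h₁]
  exact congrArg _ h₂

theorem TensorSquare.inner_tmul_apply_tmul
    (hτ : ∀ f g : Lp ℂ 2 (volume : Measure ℝ),
      (τ.tmul f g : ℝ × ℝ → ℂ) =ᵐ[volume] fun p => f p.1 * g p.2)
    (hT : ∀ Ψ : Lp ℂ 2 (volume : Measure (ℝ × ℝ)),
      (T Ψ : ℝ × ℝ → ℂ) =ᵐ[volume] fun p => φ ((p.2 : ℂ) - (p.1 : ℂ)) * Ψ (p.2, p.1))
    (hφ : Continuous fun θ : ℝ => φ θ) {M : ℝ} (hM : ∀ θ : ℝ, ‖φ θ‖ ≤ M)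
    (a b c d : Lp ℂ 2 (volume : Measure ℝ)) :
    ⟪τ.tmul a b, T (τ.tmul c d)⟫_ℂ
      = ∫ s : ℝ, (conj (a s) * d s) * ∫ θ : ℝ, φ (θ - s) * (conj (b θ) * c θ) := by
  calc ⟪τ.tmul a b, T (τ.tmul c d)⟫_ℂ
      = ∫ p : ℝ × ℝ, φ (p.2 - p.1) * ((conj (a p.1) * d p.1) * (conj (b p.2) * c p.2)) := by
        rw [L2.inner_eq_integral_conj_mul]
        refine integral_congr_ae ?_
        filter_upwards [hτ a b, τ.apply_tmul_ae_eq hτ hT c d] with p h₁ h₂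
        rw [h₁, h₂, map_mul]
        ring
    _ = _ := integral_prod_bdd_mul_mul (continuous_apply_ofReal_sub hφ).aestronglyMeasurable
          (fun p => by simpa using hM (p.2 - p.1)) (L2.integrable_conj_mul a d)
          (L2.integrable_conj_mul b c)

theorem TensorSquare.inner_tmul_adjoint_apply_tmul
    (hτ : ∀ f g : Lp ℂ 2 (volume : Measure ℝ),
      (τ.tmul f g : ℝ × ℝ → ℂ) =ᵐ[volume] fun p => f p.1 * g p.2)
    (hT : ∀ Ψ : Lp ℂ 2 (volume : Measure (ℝ × ℝ)),
      (T Ψ : ℝ × ℝ → ℂ) =ᵐ[volume] fun p => φ ((p.2 : ℂ) - (p.1 : ℂ)) * Ψ (p.2, p.1))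
    (hφ : Continuous fun θ : ℝ => φ θ) {M : ℝ} (hM : ∀ θ : ℝ, ‖φ θ‖ ≤ M)
    (a b c d : Lp ℂ 2 (volume : Measure ℝ)) :
    ⟪τ.tmul a b, (ContinuousLinearMap.adjoint T) (τ.tmul c d)⟫_ℂ
      = ∫ s : ℝ, (conj (b s) * c s) * ∫ θ : ℝ, conj (φ (θ - s)) * (conj (a θ) * d θ) := by
  calc ⟪τ.tmul a b, (ContinuousLinearMap.adjoint T) (τ.tmul c d)⟫_ℂ
      = ∫ p : ℝ × ℝ, conj (φ (p.2 - p.1))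
          * ((conj (b p.1) * c p.1) * (conj (a p.2) * d p.2)) := by
        rw [ContinuousLinearMap.adjoint_inner_right, L2.inner_eq_integral_conj_mul]
        refine integral_congr_ae ?_
        filter_upwards [τ.apply_tmul_ae_eq hτ hT a b, hτ c d] with p h₁ h₂
        rw [h₁, h₂, map_mul, map_mul]
        ring
    _ = _ := integral_prod_bdd_mul_mul (continuous_apply_ofReal_sub hφ).star.aestronglyMeasurable
          (fun p => by simpa using hM (p.2 - p.1)) (L2.integrable_conj_mul b c)
          (L2.integrable_conj_mul a d)

end Tensor

/-- On `𝓗 = L²(ℝ)`, let `S_H` be the Tomita operator of the standard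
subspace with modular data `(J_H ψ)(θ) = conj ψ(θ)`, `(Δ_H^{it}ψ)(θ) = ψ(θ − 2πt)`; its
graph is characterized by analytic continuation to the strip `0 < Im ζ < π` in the Hardy
class, with `(S_H ψ)(θ) = conj Ψ(θ + iπ)`. For `φ ∈ H^∞(𝕊_π)` with boundary values
satisfying `φ(θ + iπ) = conj φ(θ)`, the operator `(T_φ Ψ)(θ₁,θ₂) = φ(θ₂−θ₁)Ψ(θ₂,θ₁)` is
`S_H`-crossing symmetric. -/
theorem Tphi_crossing_symmetric
    (S : AntiInvolution (Lp ℂ 2 (volume : Measure ℝ)))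
    (hSgraph : ∀ ψ χ : Lp ℂ 2 (volume : Measure ℝ),
      (ψ ∈ S.dom ∧ S.toFun ψ = χ) ↔
        ∃ Ψ : ℂ → ℂ,
          DifferentiableOn ℂ Ψ {z : ℂ | 0 < z.im ∧ z.im < Real.pi} ∧
          ContinuousOn Ψ {z : ℂ | 0 ≤ z.im ∧ z.im ≤ Real.pi} ∧
          (∃ M : ℝ, ∀ t ∈ Set.Icc (0 : ℝ) Real.pi,
            (∫ θ : ℝ, ‖Ψ ((θ : ℂ) + t * I)‖ ^ 2) ≤ M) ∧
          (ψ : ℝ → ℂ) =ᵐ[volume] (fun θ : ℝ => Ψ (θ : ℂ)) ∧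
          (χ : ℝ → ℂ) =ᵐ[volume] (fun θ : ℝ => conj (Ψ ((θ : ℂ) + Real.pi * I))))
    (τ : TensorSquare (Lp ℂ 2 (volume : Measure ℝ)) (Lp ℂ 2 (volume : Measure (ℝ × ℝ))))
    (hτ : ∀ f g : Lp ℂ 2 (volume : Measure ℝ),
      (τ.tmul f g : ℝ × ℝ → ℂ) =ᵐ[volume] fun p => f p.1 * g p.2)
    (φ : ℂ → ℂ)
    (hφa : DifferentiableOn ℂ φ {z : ℂ | 0 < z.im ∧ z.im < Real.pi})
    (hφc : ContinuousOn φ {z : ℂ | 0 ≤ z.im ∧ z.im ≤ Real.pi})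
    (hφb : ∃ M : ℝ, ∀ z ∈ {z : ℂ | 0 ≤ z.im ∧ z.im ≤ Real.pi}, ‖φ z‖ ≤ M)
    (hφbc : ∀ θ : ℝ, φ ((θ : ℂ) + Real.pi * I) = conj (φ (θ : ℂ)))
    (Tφ : Lp ℂ 2 (volume : Measure (ℝ × ℝ)) →L[ℂ] Lp ℂ 2 (volume : Measure (ℝ × ℝ)))
    (hTφ : ∀ Ψ : Lp ℂ 2 (volume : Measure (ℝ × ℝ)),
      (Tφ Ψ : ℝ × ℝ → ℂ) =ᵐ[volume]
        fun p => φ ((p.2 : ℂ) - (p.1 : ℂ)) * Ψ (p.2, p.1)) :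
    CrossRelU τ S Tφ (ContinuousLinearMap.adjoint Tφ) := by
  obtain ⟨M, hM⟩ := hφb
  have hφℝ : Continuous fun θ : ℝ => φ θ :=
    hφc.comp_continuous continuous_ofReal ofReal_mem_closedStripPi
  have hMℝ (θ : ℝ) : ‖φ θ‖ ≤ M := hM _ (ofReal_mem_closedStripPi θ)
  intro φ₁ hφ₁ ψ₁ _ φ₂ _ ψ₂ hψ₂
  rw [τ.inner_tmul_adjoint_apply_tmul hτ hTφ hφℝ hMℝ, τ.inner_tmul_apply_tmul hτ hTφ hφℝ hMℝ]
  congr 1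
  funext s
  rw [S.integral_conj_mul_eq_adjFun hSgraph hφa hφc hM hφbc s hφ₁ hψ₂]
end
end

section
/- Let (X, m, ι) be a C*-Frobenius algebra in a C*-tensor category C, with ev_X := ι*m and coev_X := m*ι. Then T := m*m satisfies the categorical crossing symmetry equation (1_{X⊗X} ⊗ ev_X)(1_X ⊗ T ⊗ 1_X)(coev_X ⊗ 1_{X⊗X}) = T* = T. -/
noncomputable section
open CategoryTheory MonoidalCategory

/-- A dagger structure on a monoidal category (the algebraic part of a `C*`-tensor
category): an involutive, contravariant, monoidal star operation on morphisms. -/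
class DaggerMonoidalCategory (C : Type*) [Category C] [MonoidalCategory C] where
  dag : ∀ {X Y : C}, (X ⟶ Y) → (Y ⟶ X)
  dag_dag : ∀ {X Y : C} (f : X ⟶ Y), dag (dag f) = f
  dag_id : ∀ X : C, dag (𝟙 X) = 𝟙 X
  dag_comp : ∀ {X Y Z : C} (f : X ⟶ Y) (g : Y ⟶ Z), dag (f ≫ g) = dag g ≫ dag f
  dag_tensor : ∀ {X Y Z W : C} (f : X ⟶ Y) (g : Z ⟶ W), dag (f ⊗ₘ g) = dag f ⊗ₘ dag g
  dag_assoc : ∀ X Y Z : C, dag (α_ X Y Z).hom = (α_ X Y Z).inv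
  dag_leftUnitor : ∀ X : C, dag (λ_ X).hom = (λ_ X).inv
  dag_rightUnitor : ∀ X : C, dag (ρ_ X).hom = (ρ_ X).inv

open DaggerMonoidalCategory

variable {C : Type*} [Category C] [MonoidalCategory C] [DaggerMonoidalCategory C]

/-- The categorical crossing map determined by a real object `X` with evaluation `ev` and
coevaluation `coev`:
`𝔠_X(T) = (1_{X⊗X} ⊗ ev)(1_X ⊗ T ⊗ 1_X)(coev ⊗ 1_{X⊗X})` (with associators inserted). -/
def catCross {C : Type*} [Category C] [MonoidalCategory C] (X : C)
    (ev : X ⊗ X ⟶ 𝟙_ C) (coev : 𝟙_ C ⟶ X ⊗ X) (T : X ⊗ X ⟶ X ⊗ X) : X ⊗ X ⟶ X ⊗ X :=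
  (λ_ (X ⊗ X)).inv ≫ (coev ▷ (X ⊗ X)) ≫ (α_ X X (X ⊗ X)).hom ≫
    (X ◁ (α_ X X X).inv) ≫ (X ◁ (T ▷ X)) ≫ (X ◁ (α_ X X X).hom) ≫
    (α_ X X (X ⊗ X)).inv ≫ ((X ⊗ X) ◁ ev) ≫ (ρ_ (X ⊗ X)).hom

/-!
Crossing a composite `p ≫ q` rotates `p` by the coevaluation and `q` by the evaluation
(`catCross_comp`). For `T = m ≫ m*`, coevaluation `m*ι` and evaluation `ι*m`, the Frobenius
property together with unitality are snake identities: the rotated `m` is `m*` and the rotated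
`m*` is `m`. What is left is `(m* ⊗ 1)(1 ⊗ m)`, which is `m*m` by the Frobenius property again.
-/

namespace DaggerMonoidalCategory

theorem dag_whiskerLeft (X : C) {Y Z : C} (f : Y ⟶ Z) : dag (X ◁ f) = X ◁ dag f := by
  rw [← id_tensorHom, dag_tensor, dag_id, id_tensorHom]

theorem dag_comp_dag_self {X Y : C} (f : X ⟶ Y) : dag (f ≫ dag f) = f ≫ dag f := by
  rw [dag_comp, dag_dag]

end DaggerMonoidalCategory

theorem catCross_comp {C : Type*} [Category C] [MonoidalCategory C] {X Y : C}
    (ev : X ⊗ X ⟶ 𝟙_ C) (coev : 𝟙_ C ⟶ X ⊗ X) (p : X ⊗ X ⟶ Y) (q : Y ⟶ X ⊗ X) :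
    catCross X ev coev (p ≫ q) =
      (((λ_ X).inv ≫ (coev ▷ X) ≫ (α_ X X X).hom ≫ (X ◁ p)) ▷ X) ≫ (α_ X Y X).hom ≫
        (X ◁ ((q ▷ X) ≫ (α_ X X X).hom ≫ (X ◁ ev) ≫ (ρ_ X).hom)) := by
  unfold catCross
  monoidal

section Frobenius

variable {X : C} {m : X ⊗ X ⟶ X} {ι : 𝟙_ C ⟶ X}

theorem frobenius_coev_snake (hunit_l : (ι ▷ X) ≫ m = (λ_ X).hom)
    (hfrob_r : (dag m ▷ X) ≫ (α_ X X X).hom ≫ (X ◁ m) = m ≫ dag m) :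
    (λ_ X).inv ≫ ((ι ≫ dag m) ▷ X) ≫ (α_ X X X).hom ≫ (X ◁ m) = dag m := by
  rw [comp_whiskerRight, Category.assoc, hfrob_r, reassoc_of% hunit_l, Iso.inv_hom_id_assoc]

theorem frobenius_ev_snake (hunit_r : (X ◁ ι) ≫ m = (ρ_ X).hom)
    (hfrob_r : (dag m ▷ X) ≫ (α_ X X X).hom ≫ (X ◁ m) = m ≫ dag m) :
    (dag m ▷ X) ≫ (α_ X X X).hom ≫ (X ◁ (m ≫ dag ι)) ≫ (ρ_ X).hom = m := by
  have hcounit : dag m ≫ (X ◁ dag ι) = (ρ_ X).inv := by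
    rw [← dag_whiskerLeft, ← dag_comp, hunit_r, dag_rightUnitor]
  rw [whiskerLeft_comp, Category.assoc, reassoc_of% hfrob_r, reassoc_of% hcounit, Iso.inv_hom_id,
    Category.comp_id]

end Frobenius

theorem frobenius_mul_crossing_symmetric_general
    (X : C) (m : X ⊗ X ⟶ X) (ι : 𝟙_ C ⟶ X)
    (hunit_l : (ι ▷ X) ≫ m = (λ_ X).hom)
    (hunit_r : (X ◁ ι) ≫ m = (ρ_ X).hom)
    (hfrob_r : (dag m ▷ X) ≫ (α_ X X X).hom ≫ (X ◁ m) = m ≫ dag m) :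
    catCross X (m ≫ dag ι) (ι ≫ dag m) (m ≫ dag m) = dag (m ≫ dag m) ∧
      dag (m ≫ dag m) = m ≫ dag m := by
  refine ⟨?_, dag_comp_dag_self m⟩
  rw [dag_comp_dag_self, catCross_comp, frobenius_coev_snake hunit_l hfrob_r,
    frobenius_ev_snake hunit_r hfrob_r, hfrob_r]

/-- Let `(X, m, ι)` be a `C*`-Frobenius algebra in a `C*`-tensor category,
with `ev = ι* ∘ m` and `coev = m* ∘ ι`. Then `T = m* ∘ m` is crossing symmetric:
`𝔠_X(T) = T* = T`. -/
theorem frobenius_mul_crossing_symmetric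
    (X : C) (m : X ⊗ X ⟶ X) (ι : 𝟙_ C ⟶ X)
    (hassoc : (m ▷ X) ≫ m = (α_ X X X).hom ≫ (X ◁ m) ≫ m)
    (hunit_l : (ι ▷ X) ≫ m = (λ_ X).hom)
    (hunit_r : (X ◁ ι) ≫ m = (ρ_ X).hom)
    (hfrob_l : (X ◁ dag m) ≫ (α_ X X X).inv ≫ (m ▷ X) = m ≫ dag m)
    (hfrob_r : (dag m ▷ X) ≫ (α_ X X X).hom ≫ (X ◁ m) = m ≫ dag m) :
    catCross X (m ≫ dag ι) (ι ≫ dag m) (m ≫ dag m) = dag (m ≫ dag m) ∧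
      dag (m ≫ dag m) = m ≫ dag m :=
  frobenius_mul_crossing_symmetric_general X m ι hunit_l hunit_r hfrob_r
end
end
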